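/- arXiv:1912.09299 — 2 statements merged into one kernel-verified Lean document; each statement's English description precedes it below -/
import Mathlib

section
/- Let μ be a probability measure on EuclideanSpace ℝ (Fin n), let σ > 0, and let φ(t) = (2πσ²)^(−n/2) · exp(−‖t‖²/(2σ²)). Then the smoothed density p̄(y) = ∫ φ(y − x) dμ(x) is differentiable at every y, with gradient ∇p̄(y) = (1/σ²) • ∫ (x − y) · φ(y − x) dμ(x) (a Bochner integral in EuclideanSpace ℝ (Fin n)). -/
/-!
Differentiation under the integral sign. The Gaussian kernel `φ` and its gradient
`-(φ t / σ²) • t` are bounded, the latter by `c / σ` because `r e^{-r²/(2σ²)} ≤ σ`; a constant is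
integrable against the finite measure `μ`, so dominated differentiation applies to
`y ↦ ∫ φ (y - x) dμ(x)` and gives `∫ -(φ (y - x) / σ²) • (y - x) dμ(x)`.
-/

open MeasureTheory InnerProductSpace Real

theorem hasFDerivAt_integral_comp_sub {E F : Type*} [NormedAddCommGroup E] [NormedSpace ℝ E]
    [MeasurableSpace E] [BorelSpace E] [SecondCountableTopology E] [NormedAddCommGroup F]
    [NormedSpace ℝ F] {μ : Measure E} [IsFiniteMeasure μ] {φ : E → F} {φ' : E → E →L[ℝ] F}
    {C C' : ℝ} (hφ : ∀ t, HasFDerivAt φ (φ' t) t) (hφ'_cont : Continuous φ')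
    (hφ_le : ∀ t, ‖φ t‖ ≤ C) (hφ'_le : ∀ t, ‖φ' t‖ ≤ C') (y : E) :
    HasFDerivAt (fun y => ∫ x, φ (y - x) ∂μ) (∫ x, φ' (y - x) ∂μ) y := by
  have hφ_cont : Continuous φ := continuous_iff_continuousAt.2 fun t => (hφ t).continuousAt
  have h_meas (z : E) : AEStronglyMeasurable (fun x => φ (z - x)) μ :=
    (hφ_cont.comp (continuous_sub_left z)).aestronglyMeasurable
  refine hasFDerivAt_integral_of_dominated_of_fderiv_le (F' := fun z x => φ' (z - x))
    (bound := fun _ => C') Filter.univ_mem (.of_forall h_meas)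
    (.of_bound (h_meas y) C (.of_forall fun x => hφ_le _))
    (hφ'_cont.comp (continuous_sub_left y)).aestronglyMeasurable
    (.of_forall fun x z _ => hφ'_le _) (integrable_const C') (.of_forall fun x z _ => ?_)
  simpa [Function.comp_def] using (hφ (z - x)).comp z (hasFDerivAt_sub_const x)

theorem hasGradientAt_integral_comp_sub {E : Type*} [NormedAddCommGroup E]
    [InnerProductSpace ℝ E] [CompleteSpace E] [MeasurableSpace E] [BorelSpace E]
    [SecondCountableTopology E] {μ : Measure E} [IsFiniteMeasure μ] {φ : E → ℝ} {g : E → E}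
    {C C' : ℝ} (hφ : ∀ t, HasGradientAt φ (g t) t) (hg_cont : Continuous g)
    (hφ_le : ∀ t, |φ t| ≤ C) (hg_le : ∀ t, ‖g t‖ ≤ C') (y : E) :
    HasGradientAt (fun y => ∫ x, φ (y - x) ∂μ) (∫ x, g (y - x) ∂μ) y := by
  have h := hasFDerivAt_integral_comp_sub (μ := μ) (φ' := fun t => toDual ℝ E (g t))
    (fun t => hasGradientAt_iff_hasFDerivAt.1 (hφ t)) ((toDual ℝ E).continuous.comp hg_cont)
    hφ_le (fun t => ((toDual ℝ E).norm_map _).trans_le (hg_le t)) y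
  rwa [show ∫ x, toDual ℝ E (g (y - x)) ∂μ = toDual ℝ E (∫ x, g (y - x) ∂μ) from
    (toDual ℝ E).toLinearIsometry.integral_comp_comm _, ← hasGradientAt_iff_hasFDerivAt] at h

section Gaussian

variable {F : Type*} [NormedAddCommGroup F]

noncomputable def gaussianKernel (c σ : ℝ) (t : F) : ℝ := c * exp (-‖t‖ ^ 2 / (2 * σ ^ 2))

@[fun_prop]
theorem continuous_gaussianKernel (c σ : ℝ) : Continuous (gaussianKernel (F := F) c σ) := by
  unfold gaussianKernel
  fun_prop

theorem abs_gaussianKernel_le {c : ℝ} (hc : 0 ≤ c) (σ : ℝ) (t : F) :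
    |gaussianKernel c σ t| ≤ c := by
  have : -‖t‖ ^ 2 / (2 * σ ^ 2) ≤ 0 :=
    div_nonpos_of_nonpos_of_nonneg (neg_nonpos.2 (sq_nonneg _)) (by positivity)
  rw [gaussianKernel, abs_of_nonneg (by positivity)]
  exact mul_le_of_le_one_right hc (exp_le_one_iff.2 this)

theorem hasGradientAt_gaussianKernel [InnerProductSpace ℝ F] [CompleteSpace F] (c σ : ℝ)
    (t : F) :
    HasGradientAt (gaussianKernel c σ) (-(gaussianKernel c σ t / σ ^ 2) • t) t := by
  have h := (((hasDerivAt_id (‖t‖ ^ 2)).neg.div_const (2 * σ ^ 2)).exp.const_mul c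
    ).comp_hasFDerivAt t (hasStrictFDerivAt_norm_sq t).hasFDerivAt
  rw [hasGradientAt_iff_hasFDerivAt]
  refine h.congr_fderiv (ContinuousLinearMap.ext fun v => ?_)
  simp only [Pi.neg_apply, id_eq, smul_apply, coe_innerSL_apply, nsmul_eq_mul,
    Nat.cast_ofNat, smul_eq_mul, gaussianKernel, neg_smul, map_neg, map_smul,
    neg_apply, toDual_apply_apply]
  ring

theorem mul_exp_neg_sq_div_le {σ : ℝ} (hσ : 0 < σ) (r : ℝ) :
    r * exp (-r ^ 2 / (2 * σ ^ 2)) ≤ σ := by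
  have h : r / σ ≤ exp (r ^ 2 / (2 * σ ^ 2)) := calc
    r / σ ≤ (r / σ) ^ 2 / 2 + 1 := by nlinarith [sq_nonneg (r / σ - 1)]
    _ ≤ exp ((r / σ) ^ 2 / 2) := add_one_le_exp _
    _ = exp (r ^ 2 / (2 * σ ^ 2)) := by ring_nf
  rw [neg_div, exp_neg, ← div_eq_mul_inv, div_le_iff₀ (exp_pos _)]
  rwa [div_le_iff₀ hσ, mul_comm] at h

theorem norm_gradient_gaussianKernel_le [NormedSpace ℝ F] {c σ : ℝ} (hc : 0 ≤ c) (hσ : 0 < σ)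
    (t : F) :
    ‖-(gaussianKernel c σ t / σ ^ 2) • t‖ ≤ c / σ := calc
  ‖-(gaussianKernel c σ t / σ ^ 2) • t‖ = c * (‖t‖ * exp (-‖t‖ ^ 2 / (2 * σ ^ 2))) / σ ^ 2 := by
    rw [norm_smul, norm_neg, Real.norm_eq_abs, abs_div,
      abs_of_nonneg (by unfold gaussianKernel; positivity), abs_of_pos (by positivity),
      gaussianKernel]
    ring
  _ ≤ c * σ / σ ^ 2 := by gcongr; exact mul_exp_neg_sq_div_le hσ _
  _ = c / σ := by field_simp

end Gaussian

theorem stmt_10 (n : ℕ) (μ : Measure (EuclideanSpace ℝ (Fin n)))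
    [IsProbabilityMeasure μ] (σ : ℝ) (hσ : 0 < σ)
    (φ : EuclideanSpace ℝ (Fin n) → ℝ)
    (hφ : ∀ t, φ t = (2 * Real.pi * σ ^ 2) ^ (-(n : ℝ) / 2) *
        Real.exp (-‖t‖ ^ 2 / (2 * σ ^ 2)))
    (pbar : EuclideanSpace ℝ (Fin n) → ℝ)
    (hp : ∀ y, pbar y = ∫ x, φ (y - x) ∂μ) :
    ∀ y, HasGradientAt pbar ((1 / σ ^ 2) • ∫ x, φ (y - x) • (x - y) ∂μ) y := by
  intro y
  have hc : 0 ≤ (2 * π * σ ^ 2) ^ (-(n : ℝ) / 2) := by positivity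
  obtain rfl : φ = gaussianKernel _ σ := funext hφ
  obtain rfl : pbar = fun y => ∫ x, gaussianKernel _ σ (y - x) ∂μ := funext hp
  convert hasGradientAt_integral_comp_sub (μ := μ) (hasGradientAt_gaussianKernel _ σ) (by fun_prop)
    (abs_gaussianKernel_le hc σ) (norm_gradient_gaussianKernel_le hc hσ) y using 1
  rw [← integral_smul]
  congr 1
  funext x
  module
end

section
/- Let N ≥ 1, let c > 0 (corresponding to c = σ²ρ), and let k, y, u : ZMod N → ℂ. Define circular convolution (f ⋆ g)(t) = ∑_{s} f(s) · g(t − s), the correlation kernel k†(t) = conj(k(−t)), and the discrete Fourier transform (𝓕 f)(ω) = ∑_{t} f(t) · exp(−2πi·ω·t/N). Suppose x̂ : ZMod N → ℂ satisfies, for every frequency ω, (𝓕 x̂)(ω) = (conj((𝓕 k)(ω)) · (𝓕 y)(ω) + c · (𝓕 u)(ω)) / (‖(𝓕 k)(ω)‖² + c). Then x̂ solves the deconvolution normal equations: k† ⋆ (k ⋆ x̂) + c • x̂ = k† ⋆ y + c • u. -/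
open Finset


lemma char_eq (N : ℕ) [NeZero N] (t ω : ZMod N) :
    (ZMod.stdAddChar (-(t * ω)) : ℂ) =
      Complex.exp (-2 * Real.pi * Complex.I * (ω.val : ℂ) * (t.val : ℂ) / (N : ℂ)) := by
  have h : -(t * ω) = (((-(t.val * ω.val : ℤ)) : ℤ) : ZMod N) := by
    push_cast [ZMod.natCast_zmod_val]
    ring
  rw [h, ZMod.stdAddChar_coe]
  congr 1
  push_cast
  ring

lemma mydft_eq (N : ℕ) [NeZero N] (f : ZMod N → ℂ) (ω : ZMod N) :
    (∑ t : ZMod N, f t * Complex.exp (-2 * Real.pi * Complex.I * (ω.val : ℂ) * (t.val : ℂ) / (N : ℂ)))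
      = ZMod.dft f ω := by
  rw [ZMod.dft_apply]
  refine Finset.sum_congr rfl fun t _ => ?_
  rw [smul_eq_mul, ← char_eq, mul_comm]

lemma dft_conv (N : ℕ) [NeZero N] (f g : ZMod N → ℂ) (ω : ZMod N) :
    ZMod.dft (fun t => ∑ s : ZMod N, f s * g (t - s)) ω = ZMod.dft f ω * ZMod.dft g ω := by
  rw [ZMod.dft_apply, ZMod.dft_apply, ZMod.dft_apply, Finset.sum_mul_sum]
  simp only [smul_eq_mul, Finset.mul_sum]
  rw [Finset.sum_comm]
  refine Finset.sum_congr rfl fun s _ => ?_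
  refine Fintype.sum_equiv (Equiv.subRight s) _ _ fun t => ?_
  simp only [Equiv.subRight_apply]
  rw [show -(t * ω) = (-(s * ω)) + (-((t - s) * ω)) by ring, AddChar.map_add_eq_mul]
  ring

lemma conj_char (N : ℕ) [NeZero N] (x : ZMod N) :
    (starRingEnd ℂ) (ZMod.stdAddChar x : ℂ) = (ZMod.stdAddChar (-x) : ℂ) := by
  have h : x = ((x.val : ℤ) : ZMod N) := by push_cast [ZMod.natCast_zmod_val]; rfl
  have h2 : -x = (((-(x.val : ℤ)) : ℤ) : ZMod N) := by push_cast [ZMod.natCast_zmod_val]; rfl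
  rw [h2, ZMod.stdAddChar_coe]
  conv_lhs => rw [h, ZMod.stdAddChar_coe]
  rw [← Complex.exp_conj]
  congr 1
  simp only [map_neg, map_mul, map_div₀, Complex.conj_I, Complex.conj_ofReal, map_intCast,
    map_ofNat, map_natCast, Int.cast_natCast, Int.cast_neg]
  ring

lemma dft_kdag (N : ℕ) [NeZero N] (k kdag : ZMod N → ℂ)
    (hkdag : ∀ t, kdag t = (starRingEnd ℂ) (k (-t))) (ω : ZMod N) :
    ZMod.dft kdag ω = (starRingEnd ℂ) (ZMod.dft k ω) := by
  simp only [ZMod.dft_apply, smul_eq_mul, map_sum, map_mul, conj_char]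
  refine Fintype.sum_equiv (Equiv.neg _) _ _ fun t => ?_
  simp only [Equiv.neg_apply, hkdag, neg_neg]
  ring_nf

theorem stmt_15 (N : ℕ) [NeZero N] (hN : 1 ≤ N) (c : ℝ) (hc : 0 < c)
    (k y u xhat : ZMod N → ℂ)
    (conv : (ZMod N → ℂ) → (ZMod N → ℂ) → ZMod N → ℂ)
    (hconv : ∀ f g t, conv f g t = ∑ s : ZMod N, f s * g (t - s))
    (kdag : ZMod N → ℂ) (hkdag : ∀ t, kdag t = (starRingEnd ℂ) (k (-t)))
    (dft : (ZMod N → ℂ) → ZMod N → ℂ)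
    (hdft : ∀ f ω, dft f ω = ∑ t : ZMod N,
        f t * Complex.exp (-2 * Real.pi * Complex.I * (ω.val : ℂ) * (t.val : ℂ) / (N : ℂ)))
    (hx : ∀ ω, dft xhat ω =
        ((starRingEnd ℂ) (dft k ω) * dft y ω + (c : ℂ) * dft u ω) /
          (((‖dft k ω‖ ^ 2 + c : ℝ)) : ℂ)) :
    conv kdag (conv k xhat) + c • xhat = conv kdag y + c • u := by
  have hdft' : ∀ f ω, dft f ω = ZMod.dft f ω := fun f ω => by rw [hdft, mydft_eq]
  have hconvf : ∀ f g : ZMod N → ℂ, conv f g = fun t => ∑ s : ZMod N, f s * g (t - s) :=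
    fun f g => funext (hconv f g)
  have dconv : ∀ (f g : ZMod N → ℂ) ω, ZMod.dft (conv f g) ω = ZMod.dft f ω * ZMod.dft g ω :=
    fun f g ω => by rw [hconvf]; exact dft_conv N f g ω
  apply (ZMod.dft (N := N) (E := ℂ)).injective
  rw [map_add, map_add, ZMod.dft_const_smul, ZMod.dft_const_smul]
  funext ω
  simp only [Pi.add_apply, Pi.smul_apply, dconv, dft_kdag N k kdag hkdag, Complex.real_smul]
  set K := ZMod.dft k ω with hK
  set Y := ZMod.dft y ω
  set U := ZMod.dft u ω
  have hX : ZMod.dft xhat ω = ((starRingEnd ℂ) K * Y + (c : ℂ) * U) / ((‖K‖ ^ 2 + c : ℝ) : ℂ) := by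
    rw [← hdft' xhat ω, hx, hdft' k, hdft' y, hdft' u]
  have hd : ((‖K‖ ^ 2 + c : ℝ) : ℂ) ≠ 0 := Complex.ofReal_ne_zero.2 (by positivity)
  have hKK : (starRingEnd ℂ) K * K = ((‖K‖ ^ 2 : ℝ) : ℂ) := by
    rw [mul_comm, Complex.mul_conj']; norm_cast
  have hsum : (starRingEnd ℂ) K * K + (c : ℂ) = ((‖K‖ ^ 2 + c : ℝ) : ℂ) := by
    rw [hKK]; push_cast; ring
  rw [hX]
  set A := (starRingEnd ℂ) K * Y + (c : ℂ) * U with hA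
  set d := ((‖K‖ ^ 2 + c : ℝ) : ℂ)
  calc (starRingEnd ℂ) K * (K * (A / d)) + (c : ℂ) * (A / d)
      = ((starRingEnd ℂ) K * K + (c : ℂ)) * (A / d) := by ring
    _ = d * (A / d) := by rw [hsum]
    _ = A := by rw [mul_comm, div_mul_cancel₀ A hd]
end
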